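/- Suppose f : ℝ → ℝ is continuous, bounded, strictly increasing, with 0 ≤ f(x) ≤ M for all x, g : ℝ → ℝ satisfies g(f(x)) = x for all x with r ↦ |g(r)| integrable on (0,M), and suppose ρ(x) > 0 for every x ∈ ℝ^N. Then the Lyapunov functional F(u) = ∫_{ℝ^N} [ -½ f(u(x)) (J *_ρ (f∘u))(x) + ∫₀^{f(u(x))} g(r) dr - h(x) f(u(x)) ] ρ(x) dx is continuous on C_ρ(ℝ^N): if u_n, u are continuous with ‖u_n‖_ρ, ‖u‖_ρ < ∞ and ‖u_n - u‖_ρ → 0, then F(u_n) → F(u). -/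

import Mathlib

open MeasureTheory Real

/-- The weighted convolution `(J *_ρ v)(x) = ∫ J(x-y) v(y) ρ(y) dy` on `ℝ^N`. -/
noncomputable def convW {N : ℕ} (J ρ v : (Fin N → ℝ) → ℝ) (x : Fin N → ℝ) : ℝ :=
  ∫ y, J (x - y) * v y * ρ y

/-- The Lyapunov functional
`F(u) = ∫ [ -½ f(u(x)) (J *_ρ (f∘u))(x) + ∫₀^{f(u(x))} g(r) dr - h(x) f(u(x)) ] ρ(x) dx`,
where `g` is (an extension of) `f⁻¹`. -/
noncomputable def lyap {N : ℕ} (J ρ h : (Fin N → ℝ) → ℝ) (f g : ℝ → ℝ)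
    (u : (Fin N → ℝ) → ℝ) : ℝ :=
  ∫ x, (-(1/2) * f (u x) * convW J ρ (fun y => f (u y)) x
    + (∫ r in (0:ℝ)..(f (u x)), g r) - h x * f (u x)) * ρ x

/-!
Convergence in `‖·‖_ρ` with `ρ > 0` gives pointwise convergence `U n → u`. The integrand of `F`
is dominated by `C ρ`, with `C` depending only on `M`, `‖J‖₁`, `sup ρ`, `sup |h|` and
`∫₀^M |g|`, and it converges pointwise (the convolution term by dominated convergence in `y`),
so dominated convergence gives `F(U n) → F(u)`. The delicate term is `t ↦ ∫₀^{f t} g`: as the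
inverse of `f`, `g` is monotone on the open interval `range f`, hence locally integrable there,
which makes this primitive continuous.
-/

open Filter Set Topology
open scoped Convolution

theorem tendsto_of_abs_sub_mul_le {a : ℕ → ℝ} {b c : ℝ} (hc : 0 < c)
    (h : ∀ ε : ℝ, 0 < ε → ∃ n₀ : ℕ, ∀ n ≥ n₀, |a n - b| * c ≤ ε) :
    Tendsto a atTop (𝓝 b) := by
  refine Metric.tendsto_atTop.2 fun ε hε => ?_
  obtain ⟨n₀, hn₀⟩ := h (ε * c / 2) (by positivity)
  refine ⟨n₀, fun n hn => ?_⟩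
  have := hn₀ n hn
  rw [Real.dist_eq]
  nlinarith [abs_nonneg (a n - b)]

theorem isOpen_range_of_strictMono {f : ℝ → ℝ} (hf : Continuous f) (hmono : StrictMono f) :
    IsOpen (range f) := by
  refine isOpen_iff_mem_nhds.2 ?_
  rintro _ ⟨w, rfl⟩
  have hsub : Icc (f (w - 1)) (f (w + 1)) ⊆ range f :=
    (isPreconnected_range hf).ordConnected.out (mem_range_self _) (mem_range_self _)
  exact mem_of_superset (Icc_mem_nhds (hmono (by linarith)) (hmono (by linarith))) hsub

theorem monotoneOn_range_of_leftInverse {f g : ℝ → ℝ} (hmono : StrictMono f)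
    (hg : ∀ x, g (f x) = x) : MonotoneOn g (range f) := by
  rintro _ ⟨a, rfl⟩ _ ⟨b, rfl⟩ hab
  rw [hg, hg]
  exact hmono.le_iff_le.1 hab

theorem continuousOn_primitive_of_isOpen {E : Type*} [NormedAddCommGroup E] [NormedSpace ℝ E]
    {g : ℝ → E} {S : Set ℝ} (hS : IsOpen S)
    (hg : ∀ s ∈ S, ∀ t ∈ S, IntervalIntegrable g volume s t) (a : ℝ) :
    ContinuousOn (fun t => ∫ r in a..t, g r) S := by
  by_cases h : ∃ t₀ ∈ S, IntervalIntegrable g volume a t₀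
  · obtain ⟨t₀, ht₀, hat₀⟩ := h
    intro t ht
    obtain ⟨c, d, htcd, hnhds, hsub⟩ := exists_Icc_mem_subset_of_mem_nhds (hS.mem_nhds ht)
    have hcd : c ≤ d := htcd.1.trans htcd.2
    have hc : c ∈ S := hsub (left_mem_Icc.2 hcd)
    have hsplit : ∀ s ∈ Icc c d, ∫ r in a..s, g r = (∫ r in a..c, g r) + ∫ r in c..s, g r :=
      fun s hs => (intervalIntegral.integral_add_adjacent_intervals
        (hat₀.trans (hg t₀ ht₀ c hc)) (hg c hc s (hsub hs))).symm
    have hprim : ContinuousOn (fun s => ∫ r in c..s, g r) (Icc c d) := by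
      simpa only [uIcc_of_le hcd] using intervalIntegral.continuousOn_primitive_interval'
        (hg c hc d (hsub (right_mem_Icc.2 hcd))) left_mem_uIcc
    exact ((continuousOn_const.add hprim).congr hsplit).continuousAt hnhds |>.continuousWithinAt
  · -- Otherwise no integral `∫ a..t` with `t ∈ S` exists, and all of them take the junk value `0`.
    push Not at h
    exact continuousOn_const.congr fun t ht => intervalIntegral.integral_undef (h t ht)

theorem abs_intervalIntegral_le_of_mem_Icc {g : ℝ → ℝ} {a b t : ℝ}
    (hg : IntervalIntegrable (fun r => |g r|) volume a b) (ht : t ∈ Icc a b) :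
    |∫ r in a..t, g r| ≤ ∫ r in a..b, |g r| :=
  (intervalIntegral.abs_integral_le_integral_abs ht.1).trans <|
    intervalIntegral.integral_mono_interval le_rfl ht.1 ht.2
      (Eventually.of_forall fun _ => abs_nonneg _) hg

theorem continuous_primitive_comp_of_leftInverse {f g : ℝ → ℝ} (hf : Continuous f)
    (hmono : StrictMono f) (hg : ∀ x, g (f x) = x) (a : ℝ) :
    Continuous fun t => ∫ r in a..f t, g r := by
  have hint : ∀ s ∈ range f, ∀ t ∈ range f, IntervalIntegrable g volume s t :=
    fun s hs t ht => ((monotoneOn_range_of_leftInverse hmono hg).mono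
      ((isPreconnected_range hf).ordConnected.uIcc_subset hs ht)).intervalIntegrable
  exact (continuousOn_primitive_of_isOpen (isOpen_range_of_strictMono hf hmono) hint a
    ).comp_continuous hf mem_range_self

section Convolution

variable {N : ℕ} {J ρ v : (Fin N → ℝ) → ℝ} {A B : ℝ}

theorem convW_eq_convolution (J ρ v : (Fin N → ℝ) → ℝ) :
    convW J ρ v = (fun y => v y * ρ y) ⋆[ContinuousLinearMap.mul ℝ ℝ] J := by
  ext x
  simp only [convW, convolution, ContinuousLinearMap.mul_apply']
  congr 1 with y
  ring

theorem aestronglyMeasurable_convW (hJ : Integrable J) (hvρ : Integrable fun y => v y * ρ y) :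
    AEStronglyMeasurable (convW J ρ v) := by
  rw [convW_eq_convolution]
  exact (hvρ.integrable_convolution _ hJ).aestronglyMeasurable

theorem norm_convW_integrand_le (hv : ∀ y, ‖v y‖ ≤ A) (hρ : ∀ y, ‖ρ y‖ ≤ B) (x y : Fin N → ℝ) :
    ‖J (x - y) * v y * ρ y‖ ≤ ‖J (x - y)‖ * (A * B) := by
  rw [norm_mul, norm_mul, mul_assoc]
  gcongr
  · exact (norm_nonneg _).trans (hv y)
  · exact hv y
  · exact hρ y

theorem norm_convW_le (hJ : Integrable J) (hv : ∀ y, ‖v y‖ ≤ A) (hρ : ∀ y, ‖ρ y‖ ≤ B)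
    (x : Fin N → ℝ) : ‖convW J ρ v x‖ ≤ (∫ y, ‖J y‖) * (A * B) := by
  calc ‖convW J ρ v x‖ ≤ ∫ y, ‖J (x - y)‖ * (A * B) :=
        norm_integral_le_of_norm_le ((hJ.comp_sub_left x).norm.mul_const _)
          (Eventually.of_forall (norm_convW_integrand_le hv hρ x))
    _ = (∫ y, ‖J y‖) * (A * B) := by
        rw [integral_mul_const, integral_sub_left_eq_self (fun y => ‖J y‖)]

theorem tendsto_convW {V : ℕ → (Fin N → ℝ) → ℝ} (hJ : Integrable J)
    (hρm : AEStronglyMeasurable ρ) (hρ : ∀ y, ‖ρ y‖ ≤ B)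
    (hVm : ∀ n, AEStronglyMeasurable (V n)) (hV : ∀ n y, ‖V n y‖ ≤ A)
    (hlim : ∀ y, Tendsto (fun n => V n y) atTop (𝓝 (v y))) (x : Fin N → ℝ) :
    Tendsto (fun n => convW J ρ (V n) x) atTop (𝓝 (convW J ρ v x)) :=
  tendsto_integral_of_dominated_convergence (fun y => ‖J (x - y)‖ * (A * B))
    (fun n => ((hJ.comp_sub_left x).aestronglyMeasurable.mul (hVm n)).mul hρm)
    ((hJ.comp_sub_left x).norm.mul_const _)
    (fun n => Eventually.of_forall (norm_convW_integrand_le (hV n) hρ x))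
    (Eventually.of_forall fun y => ((hlim y).const_mul _).mul_const _)

end Convolution

noncomputable def lyapDensity {N : ℕ} (J ρ h : (Fin N → ℝ) → ℝ) (f g : ℝ → ℝ)
    (u : (Fin N → ℝ) → ℝ) (x : Fin N → ℝ) : ℝ :=
  (-(1/2) * f (u x) * convW J ρ (fun y => f (u y)) x
    + (∫ r in (0:ℝ)..(f (u x)), g r) - h x * f (u x)) * ρ x

theorem lyap_eq_integral_lyapDensity {N : ℕ} (J ρ h : (Fin N → ℝ) → ℝ) (f g : ℝ → ℝ)
    (u : (Fin N → ℝ) → ℝ) : lyap J ρ h f g u = ∫ x, lyapDensity J ρ h f g u x :=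
  rfl

section LyapDensity

variable {N : ℕ} {J ρ h : (Fin N → ℝ) → ℝ} {f g : ℝ → ℝ} {M Cρ Ch CΦ : ℝ}

theorem abs_lyapDensity_le (hJ : Integrable J) (hρ0 : ∀ x, 0 ≤ ρ x) (hρ : ∀ x, ρ x ≤ Cρ)
    (hh : ∀ x, |h x| ≤ Ch) (hfM : ∀ t, |f t| ≤ M)
    (hΦ : ∀ t, |∫ r in (0:ℝ)..f t, g r| ≤ CΦ) (u : (Fin N → ℝ) → ℝ) (x : Fin N → ℝ) :
    |lyapDensity J ρ h f g u x| ≤ (1/2 * M * ((∫ y, ‖J y‖) * (M * Cρ)) + CΦ + Ch * M) * ρ x := by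
  have hconv : |convW J ρ (fun y => f (u y)) x| ≤ (∫ y, ‖J y‖) * (M * Cρ) :=
    norm_convW_le hJ (fun y => hfM (u y)) (fun y => (Real.norm_of_nonneg (hρ0 y)).trans_le (hρ y)) x
  rw [lyapDensity, abs_mul, abs_of_nonneg (hρ0 x)]
  refine mul_le_mul_of_nonneg_right ?_ (hρ0 x)
  have hM : 0 ≤ M := (abs_nonneg _).trans (hfM 0)
  have hA : |-(1/2) * f (u x) * convW J ρ (fun y => f (u y)) x|
      ≤ 1/2 * M * ((∫ y, ‖J y‖) * (M * Cρ)) := by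
    rw [abs_mul, abs_mul, abs_neg, abs_of_pos (by norm_num : (0:ℝ) < 1/2)]
    gcongr
    exact hfM _
  have hC : |h x * f (u x)| ≤ Ch * M := by
    rw [abs_mul]
    exact mul_le_mul (hh x) (hfM _) (abs_nonneg _) ((abs_nonneg _).trans (hh x))
  calc _ ≤ |-(1/2) * f (u x) * convW J ρ (fun y => f (u y)) x + ∫ r in (0:ℝ)..f (u x), g r|
          + |h x * f (u x)| := abs_sub _ _
    _ ≤ |-(1/2) * f (u x) * convW J ρ (fun y => f (u y)) x|
          + |∫ r in (0:ℝ)..f (u x), g r| + |h x * f (u x)| := add_le_add_left (abs_add_le _ _) _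
    _ ≤ _ := by gcongr; exact hΦ _

theorem aestronglyMeasurable_lyapDensity (hJ : Integrable J) (hρ : Integrable ρ)
    (hh : AEStronglyMeasurable h) (hf : Continuous f) (hfM : ∀ t, |f t| ≤ M)
    (hΦ : Continuous fun t => ∫ r in (0:ℝ)..f t, g r) {u : (Fin N → ℝ) → ℝ} (hu : Measurable u) :
    AEStronglyMeasurable (lyapDensity J ρ h f g u) := by
  have hfu : AEStronglyMeasurable fun x => f (u x) := (hf.measurable.comp hu).aestronglyMeasurable
  have hconv : AEStronglyMeasurable (convW J ρ fun y => f (u y)) :=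
    aestronglyMeasurable_convW hJ (hρ.bdd_mul hfu (Eventually.of_forall fun x => hfM (u x)))
  exact ((((aestronglyMeasurable_const.mul hfu).mul hconv).add
    (hΦ.measurable.comp hu).aestronglyMeasurable).sub (hh.mul hfu)).mul hρ.aestronglyMeasurable

theorem tendsto_lyapDensity (hJ : Integrable J) (hρm : AEStronglyMeasurable ρ)
    (hρ0 : ∀ x, 0 ≤ ρ x) (hρ : ∀ x, ρ x ≤ Cρ) (hf : Continuous f) (hfM : ∀ t, |f t| ≤ M)
    (hΦ : Continuous fun t => ∫ r in (0:ℝ)..f t, g r) {U : ℕ → (Fin N → ℝ) → ℝ}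
    {u : (Fin N → ℝ) → ℝ} (hU : ∀ n, Measurable (U n))
    (hlim : ∀ x, Tendsto (fun n => U n x) atTop (𝓝 (u x))) (x : Fin N → ℝ) :
    Tendsto (fun n => lyapDensity J ρ h f g (U n) x) atTop (𝓝 (lyapDensity J ρ h f g u x)) := by
  have hfU : Tendsto (fun n => f (U n x)) atTop (𝓝 (f (u x))) := (hf.tendsto _).comp (hlim x)
  have hΦU : Tendsto (fun n => ∫ r in (0:ℝ)..f (U n x), g r) atTop
      (𝓝 (∫ r in (0:ℝ)..f (u x), g r)) := (hΦ.tendsto _).comp (hlim x)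
  have hconv : Tendsto (fun n => convW J ρ (fun y => f (U n y)) x) atTop
      (𝓝 (convW J ρ (fun y => f (u y)) x)) :=
    tendsto_convW hJ hρm (fun y => (Real.norm_of_nonneg (hρ0 y)).trans_le (hρ y))
      (fun n => (hf.measurable.comp (hU n)).aestronglyMeasurable) (fun n y => hfM (U n y))
      (fun y => (hf.tendsto _).comp (hlim y)) x
  exact ((((hfU.const_mul _).mul hconv).add hΦU).sub (hfU.const_mul _)).mul_const _

end LyapDensity

theorem lyapunov_functional_continuous_general {N : ℕ}
    (J ρ h : (Fin N → ℝ) → ℝ)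
    (hJint : Integrable J)
    (hρpos : ∀ x, 0 < ρ x)
    (hρbdd : BddAbove (Set.range ρ)) (hρint : Integrable ρ)
    (hhcont : Continuous h) (hhbdd : BddAbove (Set.range fun x => |h x|))
    (f g : ℝ → ℝ) (hfc : Continuous f) (hfmono : StrictMono f)
    (M : ℝ) (hf0 : ∀ x : ℝ, 0 ≤ f x) (hfM : ∀ x : ℝ, f x ≤ M)
    (hg : ∀ x : ℝ, g (f x) = x)
    (hgint : IntervalIntegrable (fun r => |g r|) volume 0 M)
    (U : ℕ → (Fin N → ℝ) → ℝ) (u : (Fin N → ℝ) → ℝ)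
    (hUc : ∀ n, Continuous (U n))
    (hconv : ∀ ε : ℝ, 0 < ε → ∃ n₀ : ℕ, ∀ n ≥ n₀, ∀ x, |U n x - u x| * ρ x ≤ ε) :
    Filter.Tendsto (fun n => lyap J ρ h f g (U n)) Filter.atTop
      (nhds (lyap J ρ h f g u)) := by
  obtain ⟨Cρ, hCρ⟩ := hρbdd
  obtain ⟨Ch, hCh⟩ := hhbdd
  have hρ0 : ∀ x, 0 ≤ ρ x := fun x => (hρpos x).le
  have hρle : ∀ x, ρ x ≤ Cρ := fun x => hCρ (mem_range_self x)
  have hhle : ∀ x, |h x| ≤ Ch := fun x => hCh (mem_range_self x)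
  have hfle : ∀ t, |f t| ≤ M := fun t => (abs_of_nonneg (hf0 t)).trans_le (hfM t)
  have hΦ := continuous_primitive_comp_of_leftInverse hfc hfmono hg 0
  have hΦle : ∀ t, |∫ r in (0:ℝ)..f t, g r| ≤ ∫ r in (0:ℝ)..M, |g r| :=
    fun t => abs_intervalIntegral_le_of_mem_Icc hgint ⟨hf0 t, hfM t⟩
  have hlim : ∀ x, Tendsto (fun n => U n x) atTop (𝓝 (u x)) := fun x =>
    tendsto_of_abs_sub_mul_le (hρpos x) fun ε hε => (hconv ε hε).imp fun _ hn₀ n hn => hn₀ n hn x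
  simp only [lyap_eq_integral_lyapDensity]
  exact tendsto_integral_of_dominated_convergence _
    (fun n => aestronglyMeasurable_lyapDensity hJint hρint hhcont.aestronglyMeasurable hfc hfle hΦ
      (hUc n).measurable)
    (hρint.const_mul _)
    (fun n => Eventually.of_forall fun x => (Real.norm_eq_abs _).trans_le
      (abs_lyapDensity_le hJint hρ0 hρle hhle hfle hΦle (U n) x))
    (Eventually.of_forall (tendsto_lyapDensity hJint hρint.aestronglyMeasurable hρ0 hρle hfc hfle
      hΦ (fun n => (hUc n).measurable) hlim))

/-- with `ρ` strictly positive, the Lyapunov functional is continuous on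
`C_ρ(ℝ^N)`: if `‖u_n - u‖_ρ → 0` then `F(u_n) → F(u)`. -/
theorem lyapunov_functional_continuous {N : ℕ} (hN : 1 ≤ N)
    (J ρ h : (Fin N → ℝ) → ℝ)
    (hJint : Integrable J) (hJpos : ∀ x, 0 ≤ J x)
    (hρcont : Continuous ρ) (hρpos : ∀ x, 0 < ρ x)
    (hρbdd : BddAbove (Set.range ρ)) (hρint : Integrable ρ)
    (hhcont : Continuous h) (hhbdd : BddAbove (Set.range fun x => |h x|))
    (f g : ℝ → ℝ) (hfc : Continuous f) (hfmono : StrictMono f)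
    (M : ℝ) (hf0 : ∀ x : ℝ, 0 ≤ f x) (hfM : ∀ x : ℝ, f x ≤ M)
    (hg : ∀ x : ℝ, g (f x) = x)
    (hgint : IntervalIntegrable (fun r => |g r|) volume 0 M)
    (U : ℕ → (Fin N → ℝ) → ℝ) (u : (Fin N → ℝ) → ℝ)
    (hUc : ∀ n, Continuous (U n))
    (hUb : ∀ n, BddAbove (Set.range fun x => |U n x| * ρ x))
    (huc : Continuous u)
    (hub : BddAbove (Set.range fun x => |u x| * ρ x))
    (hconv : ∀ ε : ℝ, 0 < ε → ∃ n₀ : ℕ, ∀ n ≥ n₀, ∀ x, |U n x - u x| * ρ x ≤ ε) :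
    Filter.Tendsto (fun n => lyap J ρ h f g (U n)) Filter.atTop
      (nhds (lyap J ρ h f g u)) :=
  lyapunov_functional_continuous_general J ρ h hJint hρpos hρbdd hρint hhcont hhbdd f g hfc hfmono M
    hf0 hfM hg hgint U u hUc hconv
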